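/- arXiv:1609.04609 — 2 statements merged into one kernel-verified Lean document; each statement's English description precedes it below -/
import Mathlib

section
/- Let Q be a simple unital associative ring which is Baer (for every subset S of Q there exists an idempotent e ∈ Q with rann(S) = eQ) and which contains a nonzero nilpotent element. Then a subset S of Q is a maximal zero product subset if and only if S = eQ(1−e) = {e·x·(1−e) : x ∈ Q} for some idempotent e of Q with e ≠ 0 and e ≠ 1. -/
/-- A two-sided ideal: an additive subgroup `I` with `QI ⊆ I` and `IQ ⊆ I`. -/
def IsTwoSidedIdealSub {Q : Type*} [Ring Q] (I : AddSubgroup Q) : Prop :=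
  (∀ a ∈ I, ∀ x : Q, x * a ∈ I) ∧ (∀ a ∈ I, ∀ x : Q, a * x ∈ I)

/-- The right annihilator of a subset `S`. -/
def rann {Q : Type*} [Ring Q] (S : Set Q) : Set Q := {a : Q | ∀ s ∈ S, s * a = 0}

/-- A nonempty subset `S` of `Q` has zero product if `S² = 0`. -/
def HasZeroProduct {Q : Type*} [Ring Q] (S : Set Q) : Prop :=
  S.Nonempty ∧ ∀ s ∈ S, ∀ t ∈ S, s * t = 0

/-- A maximal zero product subset: maximal under inclusion among zero product subsets. -/
def IsMaxZeroProduct {Q : Type*} [Ring Q] (S : Set Q) : Prop :=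
  HasZeroProduct S ∧ ∀ T : Set Q, HasZeroProduct T → S ⊆ T → S = T

/-- Elements whose right multiplication kills `w`, as an additive subgroup. -/
def rKer {Q : Type*} [Ring Q] (w : Q) : AddSubgroup Q where
  carrier := {u : Q | u * w = 0}
  zero_mem' := zero_mul w
  add_mem' := by
    intro a b ha hb
    simp only [Set.mem_setOf_eq] at *
    rw [add_mul, ha, hb, add_zero]
  neg_mem' := by
    intro a ha
    simp only [Set.mem_setOf_eq] at *
    rw [neg_mul, ha, neg_zero]

/-- Elements whose left multiplication kills `w`, as an additive subgroup. -/
def lKer {Q : Type*} [Ring Q] (w : Q) : AddSubgroup Q where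
  carrier := {u : Q | w * u = 0}
  zero_mem' := mul_zero w
  add_mem' := by
    intro a b ha hb
    simp only [Set.mem_setOf_eq] at *
    rw [mul_add, ha, hb, add_zero]
  neg_mem' := by
    intro a ha
    simp only [Set.mem_setOf_eq] at *
    rw [mul_neg, ha, neg_zero]

lemma mem_rKer {Q : Type*} [Ring Q] {w u : Q} : u ∈ rKer w ↔ u * w = 0 := Iff.rfl

lemma mem_lKer {Q : Type*} [Ring Q] {w u : Q} : u ∈ lKer w ↔ w * u = 0 := Iff.rfl

/-- In a simple ring, any additive subgroup that contains all `a * c * b` for a fixed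
nonzero `c` contains `1`. -/
lemma one_mem_of_forall_mul_mem {Q : Type*} [Ring Q]
    (hsimple : ∀ I : AddSubgroup Q, IsTwoSidedIdealSub I → I = ⊥ ∨ I = ⊤)
    {c : Q} (hc : c ≠ 0) (H : AddSubgroup Q)
    (hH : ∀ a b : Q, a * c * b ∈ H) : (1 : Q) ∈ H := by
  set g : Set Q := {x : Q | ∃ a b : Q, x = a * c * b} with hg
  set I : AddSubgroup Q := AddSubgroup.closure g with hI
  have hgen : ∀ a b : Q, a * c * b ∈ I := fun a b =>
    AddSubgroup.subset_closure ⟨a, b, rfl⟩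
  have hideal : IsTwoSidedIdealSub I := by
    constructor
    · intro a ha x
      have hsub : g ⊆ (AddSubgroup.comap (AddMonoidHom.mulLeft x) I : Set Q) := by
        rintro y ⟨p, q, rfl⟩
        have : x * (p * c * q) = (x * p) * c * q := by
          simp [mul_assoc]
        simpa [AddSubgroup.mem_comap, this] using hgen (x * p) q
      exact ((AddSubgroup.closure_le _).mpr hsub) ha
    · intro a ha x
      have hsub : g ⊆ (AddSubgroup.comap (AddMonoidHom.mulRight x) I : Set Q) := by
        rintro y ⟨p, q, rfl⟩
        have : (p * c * q) * x = p * c * (q * x) := by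
          simp [mul_assoc]
        simpa [AddSubgroup.mem_comap, this] using hgen p (q * x)
      exact ((AddSubgroup.closure_le _).mpr hsub) ha
  rcases hsimple I hideal with h | h
  · exfalso
    apply hc
    have hcI : c ∈ I := by simpa using hgen 1 1
    rw [h] at hcI
    exact AddSubgroup.mem_bot.mp hcI
  · have h1 : (1 : Q) ∈ I := h ▸ AddSubgroup.mem_top 1
    exact (AddSubgroup.closure_le H).mpr (by rintro y ⟨a, b, rfl⟩; exact hH a b) h1

/-- From a nonzero nilpotent, extract a nonzero square-zero element. -/
lemma exists_sq_zero {Q : Type*} [Ring Q]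
    (hnilp : ∃ x : Q, x ≠ 0 ∧ ∃ n : ℕ, 1 ≤ n ∧ x ^ n = 0) :
    ∃ y : Q, y ≠ 0 ∧ y * y = 0 := by
  classical
  obtain ⟨x, hx, n, hn1, hxn⟩ := hnilp
  have hP : ∃ m, x ^ m = 0 := ⟨n, hxn⟩
  set m := Nat.find hP with hm
  have hms : x ^ m = 0 := Nat.find_spec hP
  have hm2 : 2 ≤ m := by
    by_contra h
    push_neg at h
    interval_cases m
    · apply hx
      have h1 : (1 : Q) = 0 := by simpa using hms
      calc x = x * 1 := (mul_one x).symm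
        _ = 0 := by rw [h1, mul_zero]
    · exact hx (by simpa using hms)
  refine ⟨x ^ (m - 1), Nat.find_min hP (by omega), ?_⟩
  rw [← pow_add]
  have : m - 1 + (m - 1) = (m - 2) + m := by omega
  rw [this, pow_add, hms, mul_zero]

/-- Corollary 4.6: in a simple unital Baer ring with a nonzero nilpotent element, the
maximal zero product subsets are exactly the sets `eQ(1 - e)` for nontrivial idempotents
`e`. -/
theorem maxZeroProduct_iff_idempotent {Q : Type*} [Ring Q]
    (hsimple : ∀ I : AddSubgroup Q, IsTwoSidedIdealSub I → I = ⊥ ∨ I = ⊤)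
    (hBaer : ∀ S : Set Q, ∃ e : Q, e * e = e ∧ rann S = {a : Q | ∃ x : Q, a = e * x})
    (hnilp : ∃ x : Q, x ≠ 0 ∧ ∃ n : ℕ, 1 ≤ n ∧ x ^ n = 0)
    (S : Set Q) :
    IsMaxZeroProduct S ↔
      ∃ e : Q, e * e = e ∧ e ≠ 0 ∧ e ≠ 1 ∧
        S = {y : Q | ∃ x : Q, y = e * x * (1 - e)} := by
  -- zero product property of the corner sets
  have hcorner : ∀ e : Q, e * e = e →
      HasZeroProduct {y : Q | ∃ x : Q, y = e * x * (1 - e)} := by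
    intro e he
    constructor
    · exact ⟨0, 0, by simp⟩
    · rintro s ⟨a, rfl⟩ t ⟨b, rfl⟩
      have h0 : (1 - e) * e = 0 := by rw [sub_mul, one_mul, he, sub_self]
      have h1 : (1 - e) * (e * (b * (1 - e))) = 0 := by
        rw [← mul_assoc, h0, zero_mul]
      simp only [mul_assoc, h1, mul_zero]
  constructor
  · rintro ⟨⟨hSne, hSzero⟩, hmax⟩
    obtain ⟨e, he, hre⟩ := hBaer S
    have hse : ∀ s ∈ S, s * e = 0 := by
      intro s hs
      have heann : e ∈ rann S := by
        rw [hre]; exact ⟨1, (mul_one e).symm⟩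
      exact heann s hs
    have hes : ∀ s ∈ S, e * s = s := by
      intro s hs
      have hmem : s ∈ rann S := fun t ht => hSzero t ht s hs
      rw [hre] at hmem
      obtain ⟨x, hx⟩ := hmem
      rw [hx, ← mul_assoc, he]
    have hrep : ∀ s ∈ S, s = e * s * (1 - e) := by
      intro s hs
      rw [mul_sub, mul_one, hes s hs, hse s hs, sub_zero]
    -- S has a nonzero element
    have hSne0 : ∃ s ∈ S, s ≠ 0 := by
      by_contra h
      push_neg at h
      obtain ⟨y, hy0, hyy⟩ := exists_sq_zero hnilp
      have hST : S ⊆ ({0, y} : Set Q) := fun s hs => Or.inl (h s hs)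
      have hT : HasZeroProduct ({0, y} : Set Q) := by
        refine ⟨⟨0, Or.inl rfl⟩, ?_⟩
        rintro s (rfl | rfl) t (rfl | rfl) <;> simp [hyy]
      have := hmax _ hT hST
      apply hy0
      have hyS : y ∈ S := this ▸ (Or.inr rfl : y ∈ ({0, y} : Set Q))
      exact h y hyS
    obtain ⟨s0, hs0S, hs0⟩ := hSne0
    have he0 : e ≠ 0 := by
      intro h
      apply hs0
      have := hes s0 hs0S
      rw [h, zero_mul] at this
      exact this.symm
    have he1 : e ≠ 1 := by
      intro h
      apply hs0
      have := hse s0 hs0S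
      rw [h, mul_one] at this
      exact this
    refine ⟨e, he, he0, he1, ?_⟩
    exact hmax _ (hcorner e he) (fun s hs => ⟨s, hrep s hs⟩)
  · rintro ⟨e, he, he0, he1, rfl⟩
    refine ⟨hcorner e he, ?_⟩
    intro T hT hST
    refine Set.Subset.antisymm hST ?_
    intro s hs
    have h1 : ∀ x : Q, e * x * (1 - e) * s = 0 := fun x =>
      hT.2 _ (hST ⟨x, rfl⟩) s hs
    have h2 : ∀ x : Q, s * (e * x * (1 - e)) = 0 := fun x =>
      hT.2 s hs _ (hST ⟨x, rfl⟩)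
    have he1' : (1 : Q) - e ≠ 0 := sub_ne_zero.mpr (Ne.symm he1)
    -- (1-e)*s = 0
    have hw : (1 - e) * s = 0 := by
      have hmem : (1 : Q) ∈ rKer ((1 - e) * s) := by
        apply one_mem_of_forall_mul_mem hsimple he0
        intro a b
        show a * e * b * ((1 - e) * s) = 0
        have := h1 b
        simp only [mul_assoc] at this ⊢
        rw [this, mul_zero]
      simpa using mem_rKer.mp hmem
    have hes : e * s = s := by
      have := hw
      rw [sub_mul, one_mul, sub_eq_zero] at this
      exact this.symm
    -- s*e = 0
    have hse : s * e = 0 := by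
      have hmem : (1 : Q) ∈ lKer (s * e) := by
        apply one_mem_of_forall_mul_mem hsimple he1'
        intro a b
        show s * e * (a * (1 - e) * b) = 0
        have := congrArg (fun z => z * b) (h2 a)
        simp only [mul_assoc, zero_mul] at this ⊢
        rw [this]
      simpa using mem_lKer.mp hmem
    refine ⟨s, ?_⟩
    rw [mul_sub, mul_one, hes, hse, sub_zero]
end

section
/- Let Q be a simple unital associative ring and let e₁, e₂ be idempotents of Q with eᵢ ≠ 0 and eᵢ ≠ 1 for i = 1, 2. Then e₁Q(1−e₁) = e₂Q(1−e₂) if and only if e₁Q = e₂Q. -/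
/-!
A simple ring is prime: if `u Q v = 0` then `u = 0` or `v = 0`, because the elements `a` with
`a Q v = 0` form a two-sided ideal. For an idempotent `e` and `f ≠ 1`, the inclusion
`fQ(1 - f) ⊆ eQ(1 - e)` gives `(1 - e) f Q (1 - f) = 0`, hence `e f = f`; and `e f = f`
characterises `fQ ⊆ eQ`. Conversely `e f = f` and `f e = e` give `(1 - f)(1 - e) = 1 - f`, so
`f x (1 - f) = e (f x (1 - f)) (1 - e)`.
-/

theorem eq_zero_or_eq_zero_of_mul_mul_eq_zero {Q : Type*} [Ring Q]
    (hsimple : ∀ I : AddSubgroup Q, IsTwoSidedIdealSub I → I = ⊥ ∨ I = ⊤)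
    {u v : Q} (h : ∀ x, u * x * v = 0) : u = 0 ∨ v = 0 := by
  let I : AddSubgroup Q := ⨅ x : Q, (AddMonoidHom.mulRight (x * v)).ker
  have mem_I : ∀ a, a ∈ I ↔ ∀ x, a * (x * v) = 0 := by simp [I]
  have hI : IsTwoSidedIdealSub I := by
    refine ⟨fun a ha y => (mem_I _).2 fun x => ?_, fun a ha y => (mem_I _).2 fun x => ?_⟩
    · rw [mul_assoc, (mem_I a).1 ha x, mul_zero]
    · rw [mul_assoc, ← mul_assoc y, (mem_I a).1 ha]
  rcases hsimple I hI with hbot | htop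
  · left
    rw [← AddSubgroup.mem_bot, ← hbot, mem_I]
    simpa only [mul_assoc] using h
  · right
    simpa using (mem_I 1).1 (htop ▸ AddSubgroup.mem_top 1) 1

theorem mul_eq_right_of_corner_subset {Q : Type*} [Ring Q]
    (hsimple : ∀ I : AddSubgroup Q, IsTwoSidedIdealSub I → I = ⊥ ∨ I = ⊤)
    {e f : Q} (he : IsIdempotentElem e) (hf : f ≠ 1)
    (h : {y : Q | ∃ x, y = f * x * (1 - f)} ⊆ {y : Q | ∃ x, y = e * x * (1 - e)}) :
    e * f = f := by
  have hzero : ∀ x, (1 - e) * f * x * (1 - f) = 0 := by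
    intro x
    obtain ⟨z, hz⟩ := h ⟨x, rfl⟩
    have hfix : e * (f * x * (1 - f)) = f * x * (1 - f) := by
      rw [hz, ← mul_assoc, ← mul_assoc, he.eq]
    calc (1 - e) * f * x * (1 - f) = f * x * (1 - f) - e * (f * x * (1 - f)) := by noncomm_ring
      _ = 0 := by rw [hfix, sub_self]
  rcases eq_zero_or_eq_zero_of_mul_mul_eq_zero hsimple hzero with h' | h'
  · rw [sub_mul, one_mul, sub_eq_zero] at h'
    exact h'.symm
  · exact absurd (sub_eq_zero.1 h').symm hf

theorem corner_subset_of_mul_eq {Q : Type*} [Ring Q] {e f : Q} (hef : e * f = f)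
    (hfe : f * e = e) :
    {y : Q | ∃ x, y = f * x * (1 - f)} ⊆ {y : Q | ∃ x, y = e * x * (1 - e)} := by
  rintro _ ⟨x, rfl⟩
  have hcompl : (1 - f) * (1 - e) = 1 - f := by
    rw [mul_sub, mul_one, sub_mul, one_mul, hfe, sub_self, sub_zero]
  exact ⟨f * x * (1 - f), by rw [← mul_assoc, ← mul_assoc, hef, mul_assoc _ (1 - f), hcompl]⟩

theorem mul_eq_right_of_mul_subset {Q : Type*} [Ring Q] {e f : Q} (he : IsIdempotentElem e)
    (h : {y : Q | ∃ x, y = f * x} ⊆ {y : Q | ∃ x, y = e * x}) : e * f = f := by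
  obtain ⟨x, hx⟩ := h ⟨1, (mul_one f).symm⟩
  rw [hx, ← mul_assoc, he.eq]

theorem mul_subset_of_mul_eq {Q : Type*} [Ring Q] {e f : Q} (hef : e * f = f) :
    {y : Q | ∃ x, y = f * x} ⊆ {y : Q | ∃ x, y = e * x} := by
  rintro _ ⟨x, rfl⟩
  exact ⟨f * x, by rw [← mul_assoc, hef]⟩

theorem idempotent_corner_eq_iff_general {Q : Type*} [Ring Q]
    (hsimple : ∀ I : AddSubgroup Q, IsTwoSidedIdealSub I → I = ⊥ ∨ I = ⊤)
    (e₁ e₂ : Q) (he₁ : e₁ * e₁ = e₁) (he₂ : e₂ * e₂ = e₂)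
    (h₁1 : e₁ ≠ 1) (h₂1 : e₂ ≠ 1) :
    {y : Q | ∃ x : Q, y = e₁ * x * (1 - e₁)} = {y : Q | ∃ x : Q, y = e₂ * x * (1 - e₂)} ↔
      {y : Q | ∃ x : Q, y = e₁ * x} = {y : Q | ∃ x : Q, y = e₂ * x} := by
  constructor
  · intro h
    exact (mul_subset_of_mul_eq (mul_eq_right_of_corner_subset hsimple he₂ h₁1 h.le)).antisymm
      (mul_subset_of_mul_eq (mul_eq_right_of_corner_subset hsimple he₁ h₂1 h.ge))
  · intro h
    have h₂₁ := mul_eq_right_of_mul_subset he₂ h.le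
    have h₁₂ := mul_eq_right_of_mul_subset he₁ h.ge
    exact (corner_subset_of_mul_eq h₂₁ h₁₂).antisymm (corner_subset_of_mul_eq h₁₂ h₂₁)

/-- In a simple unital ring, for nontrivial idempotents `e₁, e₂`,
`e₁Q(1 - e₁) = e₂Q(1 - e₂)` if and only if `e₁Q = e₂Q`. -/
theorem idempotent_corner_eq_iff {Q : Type*} [Ring Q]
    (hsimple : ∀ I : AddSubgroup Q, IsTwoSidedIdealSub I → I = ⊥ ∨ I = ⊤)
    (e₁ e₂ : Q) (he₁ : e₁ * e₁ = e₁) (he₂ : e₂ * e₂ = e₂)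
    (h₁0 : e₁ ≠ 0) (h₁1 : e₁ ≠ 1) (h₂0 : e₂ ≠ 0) (h₂1 : e₂ ≠ 1) :
    {y : Q | ∃ x : Q, y = e₁ * x * (1 - e₁)} = {y : Q | ∃ x : Q, y = e₂ * x * (1 - e₂)} ↔
      {y : Q | ∃ x : Q, y = e₁ * x} = {y : Q | ∃ x : Q, y = e₂ * x} :=
  idempotent_corner_eq_iff_general hsimple e₁ e₂ he₁ he₂ h₁1 h₂1
end
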